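/- arXiv:2508.00523 — 2 statements merged into one kernel-verified Lean document; each statement's English description precedes it below -/
import Mathlib

section
/- Let n ≥ 1 and let f : 2^{[n]} → ℝ be any set function. Then the minimum of the Lovász extension over the hypercube equals the minimum of f over all subsets: min_{x ∈ [0,1]^n} f_L(x) = min_{S ⊆ [n]} f(S); both minima are attained, and the left-hand minimum is attained at the indicator vector of a minimizing set. -/
open Finset

/-- The chain set `A_i = {π(0), …, π(i-1)}` determined by a permutation `π` of `Fin n`
(0-indexed version of `{π(1), …, π(i)}`). -/
def chainSet {n : ℕ} (π : Equiv.Perm (Fin n)) (i : ℕ) : Finset (Fin n) :=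
  Finset.univ.filter fun j => (π.symm j : ℕ) < i

/-- Extended sorted coordinates: `extCoord x π 0 = 1`, `extCoord x π i = x (π (i-1))`
for `1 ≤ i ≤ n`, and `extCoord x π i = 0` for `i > n`. -/
def extCoord {n : ℕ} (x : Fin n → ℝ) (π : Equiv.Perm (Fin n)) (i : ℕ) : ℝ :=
  if h : 1 ≤ i ∧ i ≤ n then x (π ⟨i - 1, by omega⟩) else if i = 0 then 1 else 0

/-- The weight `λ_i = x_{π(i)} - x_{π(i+1)}` (with the conventions `x_{π(0)} = 1`,
`x_{π(n+1)} = 0`). -/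
def chainWeight {n : ℕ} (x : Fin n → ℝ) (π : Equiv.Perm (Fin n)) (i : ℕ) : ℝ :=
  extCoord x π i - extCoord x π (i + 1)

/-- The Lovász-extension formula `∑_{i=0}^n λ_i f(A_i)` evaluated with permutation `π`. -/
def lovasz {n : ℕ} (f : Finset (Fin n) → ℝ) (x : Fin n → ℝ) (π : Equiv.Perm (Fin n)) : ℝ :=
  ∑ i ∈ Finset.range (n + 1), chainWeight x π i * f (chainSet π i)

/-- `π` sorts the coordinates of `x` in nonincreasing order. -/
def isSorting {n : ℕ} (x : Fin n → ℝ) (π : Equiv.Perm (Fin n)) : Prop :=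
  ∀ i j : Fin n, i ≤ j → x (π j) ≤ x (π i)

/-- The chain gradient `g(x; f)`, defined by `g_{π(i)} = f(A_i) - f(A_{i-1})`. -/
def chainGrad {n : ℕ} (f : Finset (Fin n) → ℝ) (π : Equiv.Perm (Fin n)) : Fin n → ℝ :=
  fun j => f (chainSet π ((π.symm j : ℕ) + 1)) - f (chainSet π (π.symm j : ℕ))

/-- Membership in the unit hypercube `[0,1]^n`. -/
def inCube {n : ℕ} (x : Fin n → ℝ) : Prop := ∀ i, 0 ≤ x i ∧ x i ≤ 1

/-- Indicator vector `χ(S) ∈ {0,1}^n` of a subset `S ⊆ [n]`. -/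
def indic {n : ℕ} (S : Finset (Fin n)) : Fin n → ℝ := fun j => if j ∈ S then 1 else 0

lemma extCoord_zero {n : ℕ} (x : Fin n → ℝ) (π : Equiv.Perm (Fin n)) :
    extCoord x π 0 = 1 := by simp [extCoord]

lemma extCoord_top {n : ℕ} (x : Fin n → ℝ) (π : Equiv.Perm (Fin n)) :
    extCoord x π (n + 1) = 0 := by
  rw [extCoord, dif_neg (by omega), if_neg (by omega)]

lemma sum_chainWeight {n : ℕ} (x : Fin n → ℝ) (π : Equiv.Perm (Fin n)) :
    ∑ i ∈ Finset.range (n + 1), chainWeight x π i = 1 := by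
  have h := Finset.sum_range_sub' (extCoord x π) (n + 1)
  simpa [chainWeight, extCoord_zero, extCoord_top] using h

lemma chainWeight_nonneg {n : ℕ} (x : Fin n → ℝ) (hx : inCube x)
    (π : Equiv.Perm (Fin n)) (hπ : isSorting x π) {i : ℕ} (hi : i ≤ n) :
    0 ≤ chainWeight x π i := by
  rw [chainWeight, sub_nonneg]
  rcases Nat.eq_zero_or_pos i with rfl | h1
  · rw [extCoord_zero, extCoord]
    split
    · exact (hx _).2
    · split <;> norm_num
  · rcases Nat.lt_or_ge i n with h2 | h2
    · rw [extCoord, dif_pos (⟨by omega, by omega⟩ : 1 ≤ i + 1 ∧ i + 1 ≤ n),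
        extCoord, dif_pos ⟨h1, by omega⟩]
      exact hπ _ _ (Fin.mk_le_mk.mpr (by omega))
    · have : i = n := le_antisymm hi h2
      subst this
      rw [extCoord_top, extCoord, dif_pos ⟨h1, le_refl i⟩]
      exact (hx _).1

lemma min_le_lovasz {n : ℕ} (f : Finset (Fin n) → ℝ) (S : Finset (Fin n))
    (hS : ∀ T, f S ≤ f T) (x : Fin n → ℝ) (hx : inCube x)
    (π : Equiv.Perm (Fin n)) (hπ : isSorting x π) :
    f S ≤ lovasz f x π := by
  have h1 : f S = ∑ i ∈ Finset.range (n + 1), chainWeight x π i * f S := by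
    rw [← Finset.sum_mul, sum_chainWeight, one_mul]
  rw [h1, lovasz]
  refine Finset.sum_le_sum fun i hi => ?_
  exact mul_le_mul_of_nonneg_left (hS _)
    (chainWeight_nonneg x hx π hπ (Nat.lt_succ_iff.mp (Finset.mem_range.mp hi)))

lemma indic_sorted_iff {n : ℕ} (S : Finset (Fin n)) (π : Equiv.Perm (Fin n))
    (hπ : isSorting (indic S) π) (i : Fin n) :
    π i ∈ S ↔ (i : ℕ) < S.card := by
  set T : Finset (Fin n) := Finset.univ.filter (fun j => π j ∈ S) with hT
  have hTcard : T.card = S.card := by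
    have hTeq : T = S.image π.symm := by
      ext a
      simp only [hT, Finset.mem_filter, Finset.mem_univ, true_and, Finset.mem_image]
      constructor
      · intro h; exact ⟨π a, h, Equiv.symm_apply_apply _ _⟩
      · rintro ⟨s, hs, rfl⟩; simpa using hs
    rw [hTeq, Finset.card_image_of_injective _ π.symm.injective]
  have hdc : ∀ a b : Fin n, b ≤ a → π a ∈ S → π b ∈ S := by
    intro a b hba ha
    by_contra hb
    have := hπ b a hba
    simp only [indic, if_pos ha, if_neg hb] at this
    linarith
  constructor
  · intro h
    have hsub : Finset.Iic i ⊆ T := by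
      intro j hj
      simp only [hT, Finset.mem_filter, Finset.mem_univ, true_and]
      exact hdc i j (Finset.mem_Iic.mp hj) h
    have := Finset.card_le_card hsub
    rw [Fin.card_Iic, hTcard] at this
    omega
  · intro h
    by_contra hi
    have hsub : T ⊆ Finset.Iio i := by
      intro j hj
      simp only [hT, Finset.mem_filter, Finset.mem_univ, true_and] at hj
      rw [Finset.mem_Iio]
      by_contra hij
      exact hi (hdc j i (le_of_not_gt hij) hj)
    have := Finset.card_le_card hsub
    rw [Fin.card_Iio, hTcard] at this
    omega

lemma chainSet_card_eq {n : ℕ} (S : Finset (Fin n)) (π : Equiv.Perm (Fin n))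
    (hπ : isSorting (indic S) π) : chainSet π S.card = S := by
  ext j
  simp only [chainSet, Finset.mem_filter, Finset.mem_univ, true_and]
  rw [← indic_sorted_iff S π hπ (π.symm j), Equiv.apply_symm_apply]

lemma extCoord_indic {n : ℕ} (S : Finset (Fin n)) (π : Equiv.Perm (Fin n))
    (hπ : isSorting (indic S) π) {m : ℕ} (hm : m ≤ n + 1) :
    extCoord (indic S) π m = if m ≤ S.card then 1 else 0 := by
  have hk : S.card ≤ n := by simpa using S.card_le_univ
  rcases Nat.eq_zero_or_pos m with rfl | h1
  · rw [extCoord_zero, if_pos (Nat.zero_le _)]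
  · rcases Nat.lt_or_ge m (n + 1) with h2 | h2
    · rw [extCoord, dif_pos ⟨h1, by omega⟩]
      have hiff := indic_sorted_iff S π hπ ⟨m - 1, by omega⟩
      simp only [indic]
      by_cases hmk : m ≤ S.card
      · rw [if_pos (hiff.mpr (by simpa using by omega)), if_pos hmk]
      · rw [if_neg fun hmem => hmk (by have := hiff.mp hmem; simp at this; omega),
          if_neg hmk]
    · have : m = n + 1 := by omega
      subst this
      rw [extCoord_top, if_neg (by omega)]

lemma chainWeight_indic {n : ℕ} (S : Finset (Fin n)) (π : Equiv.Perm (Fin n))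
    (hπ : isSorting (indic S) π) {i : ℕ} (hi : i ≤ n) :
    chainWeight (indic S) π i = if i = S.card then 1 else 0 := by
  rw [chainWeight, extCoord_indic S π hπ (by omega), extCoord_indic S π hπ (by omega)]
  by_cases h : i = S.card
  · rw [if_pos h, if_pos (by omega), if_neg (by omega), sub_zero]
  · rcases Nat.lt_or_ge i S.card with h2 | h2
    · rw [if_neg h, if_pos (by omega), if_pos (by omega), sub_self]
    · rw [if_neg h, if_neg (by omega), if_neg (by omega), sub_self]

lemma lovasz_indic {n : ℕ} (f : Finset (Fin n) → ℝ) (S : Finset (Fin n))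
    (π : Equiv.Perm (Fin n)) (hπ : isSorting (indic S) π) :
    lovasz f (indic S) π = f S := by
  have hk : S.card ≤ n := by simpa using S.card_le_univ
  rw [lovasz]
  rw [Finset.sum_eq_single S.card]
  · rw [chainWeight_indic S π hπ hk, if_pos rfl, one_mul, chainSet_card_eq S π hπ]
  · intro i hi hne
    rw [chainWeight_indic S π hπ (Nat.lt_succ_iff.mp (Finset.mem_range.mp hi)),
      if_neg hne, zero_mul]
  · intro h
    exact absurd (Finset.mem_range.mpr (by omega)) h

/-- the minimum of the Lovász extension over the hypercube equals the
minimum of `f` over all subsets; both minima are attained, and the left-hand minimum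
is attained at the indicator vector of a minimizing set. -/
theorem lovasz_min_eq_min (n : ℕ) (hn : 1 ≤ n) (f : Finset (Fin n) → ℝ) :
    ∃ S : Finset (Fin n),
      (∀ T : Finset (Fin n), f S ≤ f T) ∧
      (∀ x : Fin n → ℝ, inCube x → ∀ π : Equiv.Perm (Fin n), isSorting x π →
        f S ≤ lovasz f x π) ∧
      (∀ π : Equiv.Perm (Fin n), isSorting (indic S) π → lovasz f (indic S) π = f S) := by
  obtain ⟨S, _, hS⟩ := Finset.exists_min_image Finset.univ f ⟨∅, Finset.mem_univ _⟩
  refine ⟨S, fun T => hS T (Finset.mem_univ T), ?_, ?_⟩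
  · intro x hx π hπ
    exact min_le_lovasz f S (fun T => hS T (Finset.mem_univ T)) x hx π hπ
  · intro π hπ
    exact lovasz_indic f S π hπ
end

section
/- (Theorem 2, DOGD-NF.) Let n, T ≥ 1, α, β ∈ (0,1], L > 0. For each t ∈ [T] let f_t = f̄_t − f̲_t, where f̄_t : 2^{[n]} → ℝ is normalized, nondecreasing and α-weakly DR-submodular, f̲_t : 2^{[n]} → ℝ is normalized, nondecreasing and β-weakly DR-supermodular, and f̄_t(S) + f̲_t(S) ≤ L for all S ⊆ [n]. Let d_1, …, d_T be integers with d_t ≥ 1 and t + d_t − 1 ≤ T; let F_t = {k ∈ [T] : k + d_k − 1 = t} and D = ∑_{t=1}^{T} d_t. Let x_1 ∈ [0,1]^n be arbitrary and define the delayed gradient descent iterates x_{t+1} = Π_{[0,1]^n}(x_t − η ∑_{k ∈ F_t} g_k), where g_t = g(x_t; f_t) is the chain gradient of f_t at x_t and η = √n/(L√D). Then for every S ⊆ [n]: ∑_{t=1}^{T} f_{t,L}(x_t) − ((1/α) ∑_{t=1}^{T} f̄_t(S) − β ∑_{t=1}^{T} f̲_t(S)) ≤ 2 L √(n D) = 2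 L √(n d̄ T), where f_{t,L} is the Lovász extension of f_t and d̄ = D/T is the average delay. (Since sampling S_t with P(S_t = A_{t,i}) = λ_{t,i} gives E[f_t(S_t)] = f_{t,L}(x_t), this bounds the expected (α,β)-regret of DOGD-NF by O(√(n d̄ T)).) -/
open Finset

/-- `f` is normalized: `f ∅ = 0`. -/
def normalizedF {n : ℕ} (f : Finset (Fin n) → ℝ) : Prop := f ∅ = 0

/-- `f` is nondecreasing. -/
def nondecreasingF {n : ℕ} (f : Finset (Fin n) → ℝ) : Prop :=
  ∀ A B : Finset (Fin n), A ⊆ B → f A ≤ f B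

/-- The marginal gain `f(i | S) = f(S ∪ {i}) - f(S)`. -/
def marginal {n : ℕ} (f : Finset (Fin n) → ℝ) (i : Fin n) (S : Finset (Fin n)) : ℝ :=
  f (insert i S) - f S

/-- `f` is `α`-weakly DR-submodular: `f(i|A) ≥ α f(i|B)` for all `A ⊆ B`, `i ∉ B`. -/
def weaklyDRSub {n : ℕ} (α : ℝ) (f : Finset (Fin n) → ℝ) : Prop :=
  ∀ A B : Finset (Fin n), A ⊆ B → ∀ i ∉ B, α * marginal f i B ≤ marginal f i A

/-- `f` is `β`-weakly DR-supermodular: `f(i|B) ≥ β f(i|A)` for all `A ⊆ B`, `i ∉ B`. -/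
def weaklyDRSuper {n : ℕ} (β : ℝ) (f : Finset (Fin n) → ℝ) : Prop :=
  ∀ A B : Finset (Fin n), A ⊆ B → ∀ i ∉ B, β * marginal f i A ≤ marginal f i B

/-- Euclidean projection onto `[0,1]^n`, i.e. coordinatewise clipping to `[0,1]`. -/
def clip {n : ℕ} (x : Fin n → ℝ) : Fin n → ℝ := fun j => max 0 (min 1 (x j))


lemma chainSet_zero {n : ℕ} (π : Equiv.Perm (Fin n)) : chainSet π 0 = ∅ := by
  simp [chainSet]

lemma chainSet_of_le {n : ℕ} (π : Equiv.Perm (Fin n)) {i : ℕ} (h : n ≤ i) :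
    chainSet π i = Finset.univ := by
  ext j; simp [chainSet]; exact lt_of_lt_of_le (π.symm j).isLt h

lemma chainSet_mono {n : ℕ} (π : Equiv.Perm (Fin n)) {i i' : ℕ} (h : i ≤ i') :
    chainSet π i ⊆ chainSet π i' := by
  intro j hj; simp [chainSet] at *; omega

lemma not_mem_chainSet {n : ℕ} (π : Equiv.Perm (Fin n)) (i : Fin n) :
    π i ∉ chainSet π (i : ℕ) := by
  simp [chainSet]

lemma chainSet_succ {n : ℕ} (π : Equiv.Perm (Fin n)) (i : Fin n) :
    chainSet π ((i : ℕ) + 1) = insert (π i) (chainSet π (i : ℕ)) := by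
  ext j
  simp only [chainSet, Finset.mem_filter, Finset.mem_univ, true_and, Finset.mem_insert]
  constructor
  · intro h
    rcases Nat.lt_succ_iff_lt_or_eq.mp h with h' | h'
    · exact Or.inr h'
    · left
      have hi : π.symm j = i := Fin.ext h'
      simpa using congrArg π hi
  · rintro (h | h)
    · subst h; simp
    · omega

lemma extCoord_succ_fin {n : ℕ} (x : Fin n → ℝ) (π : Equiv.Perm (Fin n)) (i : Fin n) :
    extCoord x π ((i : ℕ) + 1) = x (π i) := by
  have h : 1 ≤ (i : ℕ) + 1 ∧ (i : ℕ) + 1 ≤ n := ⟨Nat.le_add_left _ _, i.isLt⟩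
  rw [extCoord, dif_pos h]
  congr 2

lemma extCoord_of_gt {n : ℕ} (x : Fin n → ℝ) (π : Equiv.Perm (Fin n)) {i : ℕ} (h : n < i) :
    extCoord x π i = 0 := by
  rw [extCoord, dif_neg (by omega), if_neg (by omega)]

lemma lovasz_eq_inner {n : ℕ} (f : Finset (Fin n) → ℝ) (x : Fin n → ℝ)
    (π : Equiv.Perm (Fin n)) :
    lovasz f x π = (∑ j, x j * chainGrad f π j) + f ∅ := by
  have h1 : ∑ j, x j * chainGrad f π j
      = ∑ i ∈ Finset.range n,
          extCoord x π (i + 1) * (f (chainSet π (i + 1)) - f (chainSet π i)) := by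
    rw [← Equiv.sum_comp π (fun j => x j * chainGrad f π j),
      ← Fin.sum_univ_eq_sum_range (fun i =>
        extCoord x π (i + 1) * (f (chainSet π (i + 1)) - f (chainSet π i))) n]
    refine Finset.sum_congr rfl fun i _ => ?_
    rw [extCoord_succ_fin]
    simp [chainGrad]
  rw [h1, lovasz]
  have h2 : ∀ i, chainWeight x π i * f (chainSet π i)
      = extCoord x π i * f (chainSet π i) - extCoord x π (i+1) * f (chainSet π i) := by
    intro i; rw [chainWeight]; ring
  have h3 : ∀ i ∈ Finset.range n, extCoord x π (i + 1) * (f (chainSet π (i + 1)) - f (chainSet π i))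
      = extCoord x π (i+1) * f (chainSet π (i+1)) - extCoord x π (i+1) * f (chainSet π i) := by
    intro i _; ring
  rw [Finset.sum_congr rfl (fun i _ => h2 i), Finset.sum_congr rfl h3,
    Finset.sum_sub_distrib, Finset.sum_sub_distrib,
    Finset.sum_range_succ' (fun i => extCoord x π i * f (chainSet π i)),
    Finset.sum_range_succ (fun i => extCoord x π (i+1) * f (chainSet π i))]
  rw [extCoord_zero, extCoord_of_gt x π (Nat.lt_succ_self n), chainSet_zero]
  ring

lemma chainGrad_apply_perm {n : ℕ} (f : Finset (Fin n) → ℝ) (π : Equiv.Perm (Fin n))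
    (i : Fin n) :
    chainGrad f π (π i) = f (chainSet π ((i:ℕ)+1)) - f (chainSet π (i:ℕ)) := by
  simp [chainGrad]

lemma sum_chainGrad_reindex {n : ℕ} (f : Finset (Fin n) → ℝ) (π : Equiv.Perm (Fin n))
    (S : Finset (Fin n)) :
    ∑ j ∈ S, chainGrad f π j
      = ∑ i : Fin n, (if π i ∈ S then chainGrad f π (π i) else 0) := by
  rw [Equiv.sum_comp π (fun j => if j ∈ S then chainGrad f π j else 0),
    Finset.sum_ite_mem, Finset.univ_inter]

lemma inter_chainSet_succ_mem {n : ℕ} (π : Equiv.Perm (Fin n)) (i : Fin n)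
    {S : Finset (Fin n)} (h : π i ∈ S) :
    S ∩ chainSet π ((i:ℕ)+1) = insert (π i) (S ∩ chainSet π (i:ℕ)) := by
  rw [chainSet_succ]
  ext j
  simp only [Finset.mem_inter, Finset.mem_insert]
  constructor
  · rintro ⟨hj, hj2 | hj2⟩
    · exact Or.inl hj2
    · exact Or.inr ⟨hj, hj2⟩
  · rintro (rfl | ⟨hj, hj2⟩)
    · exact ⟨h, Or.inl rfl⟩
    · exact ⟨hj, Or.inr hj2⟩

lemma inter_chainSet_succ_not_mem {n : ℕ} (π : Equiv.Perm (Fin n)) (i : Fin n)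
    {S : Finset (Fin n)} (h : π i ∉ S) :
    S ∩ chainSet π ((i:ℕ)+1) = S ∩ chainSet π (i:ℕ) := by
  rw [chainSet_succ]
  ext j
  simp only [Finset.mem_inter, Finset.mem_insert]
  constructor
  · rintro ⟨hj, hj2 | hj2⟩
    · exact absurd (hj2 ▸ hj) h
    · exact ⟨hj, hj2⟩
  · rintro ⟨hj, hj2⟩
    exact ⟨hj, Or.inr hj2⟩

lemma sum_chainGrad_le_sub {n : ℕ} {α : ℝ} (f : Finset (Fin n) → ℝ)
    (hf : weaklyDRSub α f) (hf0 : f ∅ = 0) (π : Equiv.Perm (Fin n)) (S : Finset (Fin n)) :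
    α * ∑ j ∈ S, chainGrad f π j ≤ f S := by
  have key : ∀ i : Fin n,
      α * (if π i ∈ S then chainGrad f π (π i) else 0)
        ≤ f (S ∩ chainSet π ((i:ℕ)+1)) - f (S ∩ chainSet π (i:ℕ)) := by
    intro i
    have hsub : S ∩ chainSet π (i:ℕ) ⊆ chainSet π (i:ℕ) := Finset.inter_subset_right
    have hnm := not_mem_chainSet π i
    by_cases hmem : π i ∈ S
    · rw [if_pos hmem, inter_chainSet_succ_mem π i hmem, chainGrad_apply_perm,
        chainSet_succ]
      exact hf _ _ hsub _ hnm
    · rw [if_neg hmem, mul_zero, inter_chainSet_succ_not_mem π i hmem, sub_self]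
  calc α * ∑ j ∈ S, chainGrad f π j
      = ∑ i : Fin n, α * (if π i ∈ S then chainGrad f π (π i) else 0) := by
        rw [sum_chainGrad_reindex, Finset.mul_sum]
    _ ≤ ∑ i : Fin n, (f (S ∩ chainSet π ((i:ℕ)+1)) - f (S ∩ chainSet π (i:ℕ))) :=
        Finset.sum_le_sum (fun i _ => key i)
    _ = f S := by
        rw [Fin.sum_univ_eq_sum_range
            (fun m => f (S ∩ chainSet π (m+1)) - f (S ∩ chainSet π m)) n,
          Finset.sum_range_sub (fun m => f (S ∩ chainSet π m)),
          chainSet_of_le π (le_refl n), chainSet_zero]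
        simp [hf0]

lemma sub_le_sum_chainGrad {n : ℕ} {β : ℝ} (f : Finset (Fin n) → ℝ)
    (hf : weaklyDRSuper β f) (hf0 : f ∅ = 0) (π : Equiv.Perm (Fin n)) (S : Finset (Fin n)) :
    β * f S ≤ ∑ j ∈ S, chainGrad f π j := by
  have key : ∀ i : Fin n,
      β * (f (S ∩ chainSet π ((i:ℕ)+1)) - f (S ∩ chainSet π (i:ℕ)))
        ≤ (if π i ∈ S then chainGrad f π (π i) else 0) := by
    intro i
    have hsub : S ∩ chainSet π (i:ℕ) ⊆ chainSet π (i:ℕ) := Finset.inter_subset_right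
    have hnm := not_mem_chainSet π i
    by_cases hmem : π i ∈ S
    · rw [if_pos hmem, inter_chainSet_succ_mem π i hmem, chainGrad_apply_perm,
        chainSet_succ]
      exact hf _ _ hsub _ hnm
    · rw [if_neg hmem, inter_chainSet_succ_not_mem π i hmem, sub_self, mul_zero]
  calc β * f S
      = ∑ i : Fin n, β * (f (S ∩ chainSet π ((i:ℕ)+1)) - f (S ∩ chainSet π (i:ℕ))) := by
        rw [← Finset.mul_sum, Fin.sum_univ_eq_sum_range
            (fun m => f (S ∩ chainSet π (m+1)) - f (S ∩ chainSet π m)) n,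
          Finset.sum_range_sub (fun m => f (S ∩ chainSet π m)),
          chainSet_of_le π (le_refl n), chainSet_zero]
        simp [hf0]
    _ ≤ ∑ i : Fin n, (if π i ∈ S then chainGrad f π (π i) else 0) :=
        Finset.sum_le_sum (fun i _ => key i)
    _ = ∑ j ∈ S, chainGrad f π j := (sum_chainGrad_reindex f π S).symm

lemma chainGrad_nonneg {n : ℕ} (f : Finset (Fin n) → ℝ) (hm : nondecreasingF f)
    (π : Equiv.Perm (Fin n)) (j : Fin n) : 0 ≤ chainGrad f π j := by
  have := hm _ _ (chainSet_mono π (Nat.le_succ ((π.symm j : ℕ))))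
  simpa [chainGrad] using this

lemma sum_chainGrad_univ {n : ℕ} (f : Finset (Fin n) → ℝ) (π : Equiv.Perm (Fin n)) :
    ∑ j, chainGrad f π j = f Finset.univ - f ∅ := by
  rw [← Equiv.sum_comp π (chainGrad f π)]
  calc ∑ i : Fin n, chainGrad f π (π i)
      = ∑ i : Fin n, (f (chainSet π ((i:ℕ)+1)) - f (chainSet π (i:ℕ))) :=
        Finset.sum_congr rfl (fun i _ => chainGrad_apply_perm f π i)
    _ = f Finset.univ - f ∅ := by
        rw [Fin.sum_univ_eq_sum_range (fun m => f (chainSet π (m+1)) - f (chainSet π m)) n,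
          Finset.sum_range_sub (fun m => f (chainSet π m)),
          chainSet_of_le π (le_refl n), chainSet_zero]

lemma normSq_chainGrad_le {n : ℕ} (fb fu : Finset (Fin n) → ℝ) (L : ℝ)
    (hb0 : fb ∅ = 0) (hu0 : fu ∅ = 0) (hmb : nondecreasingF fb) (hmu : nondecreasingF fu)
    (hL : ∀ A : Finset (Fin n), fb A + fu A ≤ L) (π : Equiv.Perm (Fin n)) :
    ∑ j, (chainGrad (fun A => fb A - fu A) π j)^2 ≤ L^2 := by
  set a := chainGrad fb π with ha_def
  set b := chainGrad fu π with hb_def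
  have ha : ∀ j, 0 ≤ a j := chainGrad_nonneg fb hmb π
  have hb : ∀ j, 0 ≤ b j := chainGrad_nonneg fu hmu π
  have hsum : ∑ j, (a j + b j) ≤ L := by
    rw [Finset.sum_add_distrib, ha_def, hb_def, sum_chainGrad_univ, sum_chainGrad_univ,
      hb0, hu0]
    have := hL Finset.univ
    linarith
  have hsum0 : 0 ≤ ∑ j, (a j + b j) :=
    Finset.sum_nonneg (fun j _ => add_nonneg (ha j) (hb j))
  have hpt : ∀ j : Fin n, (chainGrad (fun A => fb A - fu A) π j)^2 ≤ (a j + b j)^2 := by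
    intro j
    have hcg : chainGrad (fun A => fb A - fu A) π j = a j - b j := by
      simp only [chainGrad, ha_def, hb_def]
      ring
    rw [hcg]
    nlinarith [ha j, hb j]
  have hsq : ∀ j : Fin n, (a j + b j)^2 ≤ (a j + b j) * ∑ k, (a k + b k) := by
    intro j
    have hle : a j + b j ≤ ∑ k, (a k + b k) :=
      Finset.single_le_sum (fun k _ => add_nonneg (ha k) (hb k))
        (Finset.mem_univ j)
    have : 0 ≤ a j + b j := by have := ha j; have := hb j; linarith
    nlinarith
  calc ∑ j, (chainGrad (fun A => fb A - fu A) π j)^2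
      ≤ ∑ j, (a j + b j)^2 := Finset.sum_le_sum (fun j _ => hpt j)
    _ ≤ ∑ j, (a j + b j) * ∑ k, (a k + b k) := Finset.sum_le_sum (fun j _ => hsq j)
    _ = (∑ j, (a j + b j)) * ∑ k, (a k + b k) := by rw [← Finset.sum_mul]
    _ ≤ L * L := mul_le_mul hsum hsum hsum0 (le_trans hsum0 hsum)
    _ = L^2 := (sq L).symm

lemma clip_pt (a b : ℝ) (hb0 : 0 ≤ b) (hb1 : b ≤ 1) :
    (max 0 (min 1 a) - b)^2 ≤ (a - b)^2 := by
  rcases le_total a 0 with h | h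
  · rw [min_eq_right (by linarith), max_eq_left (by linarith)]
    nlinarith
  · rcases le_total a 1 with h1 | h1
    · rw [min_eq_right h1, max_eq_right h]
    · rw [min_eq_left h1, max_eq_right (by linarith)]
      nlinarith

lemma inCube_clip {n : ℕ} (x : Fin n → ℝ) : inCube (clip x) := by
  intro j
  constructor
  · exact le_max_left 0 _
  · rcases le_total (x j) 1 with h | h
    · rw [clip, min_eq_right h]
      rcases le_total (x j) 0 with h' | h'
      · rw [max_eq_left h']; linarith
      · rw [max_eq_right h']; exact h
    · rw [clip, min_eq_left h, max_eq_right zero_le_one]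

lemma inner_le_of_sq {n : ℕ} (a b : Fin n → ℝ) (A B : ℝ) (hA : 0 ≤ A) (hB : 0 ≤ B)
    (ha : ∑ j, a j ^ 2 ≤ A ^ 2) (hb : ∑ j, b j ^ 2 ≤ B ^ 2) :
    ∑ j, a j * b j ≤ A * B := by
  have hcs := Finset.sum_mul_sq_le_sq_mul_sq Finset.univ a b
  have h1 : (0:ℝ) ≤ ∑ j, a j ^ 2 := Finset.sum_nonneg (fun j _ => sq_nonneg _)
  have h2 : (0:ℝ) ≤ ∑ j, b j ^ 2 := Finset.sum_nonneg (fun j _ => sq_nonneg _)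
  nlinarith [hcs, mul_le_mul ha hb h2 (by nlinarith), mul_nonneg hA hB]

lemma sum_Ico_tel (f : ℕ → ℝ) (k u : ℕ) (h : k ≤ u) :
    ∑ v ∈ Finset.Ico k u, (f v - f (v + 1)) = f k - f u := by
  rw [Finset.sum_Ico_eq_sum_range]
  have : ∀ i ∈ Finset.range (u - k), f (k + i) - f (k + i + 1)
      = (fun i => f (k + i)) i - (fun i => f (k + i)) (i + 1) := by
    intro i _
    simp [Nat.add_assoc]
  rw [Finset.sum_congr rfl this, Finset.sum_range_sub' (fun i => f (k + i))]
  congr 2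
  omega

lemma dogd_core {n T : ℕ} (η L : ℝ) (hηpos : 0 < η) (hL : 0 ≤ L)
    (g : ℕ → Fin n → ℝ) (s : ℕ → ℕ)
    (hg : ∀ t, t < T → ∑ j, (g t j)^2 ≤ L^2)
    (hs : ∀ t, t < T → t ≤ s t ∧ s t < T)
    (x : ℕ → Fin n → ℝ) (hx0 : inCube (x 0))
    (hrec : ∀ t, t < T → x (t+1) = clip (fun j => x t j -
      η * ∑ k ∈ (Finset.range T).filter (fun k => s k = t), g k j))
    (y : Fin n → ℝ) (hy : inCube y) :
    ∑ t ∈ Finset.range T, ∑ j, g t j * (x t j - y j)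
      ≤ (n : ℝ) / (2*η) + η * L^2 *
        ((∑ t ∈ Finset.range T, (((Finset.range T).filter (fun k => s k = t)).card : ℝ)^2) / 2
         + ∑ k ∈ Finset.range T, ∑ v ∈ Finset.Ico k (s k),
             (((Finset.range T).filter (fun k' => s k' = v)).card : ℝ)) := by
  have hcube : ∀ u, u ≤ T → inCube (x u) := by
    intro u hu
    cases u with
    | zero => exact hx0
    | succ v =>
      rw [hrec v (by omega)]
      exact inCube_clip _
  -- squared-norm bound on the aggregated gradient
  have hhN : ∀ u, u < T →
      ∑ j, (∑ k ∈ (Finset.range T).filter (fun k => s k = u), g k j)^2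
        ≤ ((((Finset.range T).filter (fun k => s k = u)).card : ℝ))^2 * L^2 := by
    intro u hu
    calc ∑ j, (∑ k ∈ (Finset.range T).filter (fun k => s k = u), g k j)^2
        ≤ ∑ j : Fin n, ((((Finset.range T).filter (fun k => s k = u)).card : ℝ) *
            ∑ k ∈ (Finset.range T).filter (fun k => s k = u), (g k j)^2) :=
          Finset.sum_le_sum fun j _ => sq_sum_le_card_mul_sum_sq
      _ = ((((Finset.range T).filter (fun k => s k = u)).card : ℝ)) *
            ∑ k ∈ (Finset.range T).filter (fun k => s k = u), ∑ j, (g k j)^2 := by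
          rw [← Finset.mul_sum, Finset.sum_comm]
      _ ≤ ((((Finset.range T).filter (fun k => s k = u)).card : ℝ)) *
            ∑ _k ∈ (Finset.range T).filter (fun k => s k = u), L^2 := by
          refine mul_le_mul_of_nonneg_left (Finset.sum_le_sum fun k hk => hg k ?_)
            (Nat.cast_nonneg _)
          exact Finset.mem_range.mp (Finset.mem_filter.mp hk).1
      _ = (((Finset.range T).filter (fun k => s k = u)).card : ℝ)^2 * L^2 := by
          rw [Finset.sum_const, nsmul_eq_mul]; ring
  -- one-step displacement bound
  have hstepN : ∀ u, u < T → ∑ j, (x (u+1) j - x u j)^2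
      ≤ η^2 * ∑ j, (∑ k ∈ (Finset.range T).filter (fun k => s k = u), g k j)^2 := by
    intro u hu
    rw [hrec u hu, Finset.mul_sum]
    refine Finset.sum_le_sum fun j _ => ?_
    have hcx := hcube u (le_of_lt hu) j
    have h := clip_pt (x u j - η * ∑ k ∈ (Finset.range T).filter (fun k => s k = u), g k j)
      (x u j) hcx.1 hcx.2
    calc (clip (fun j => x u j - η * ∑ k ∈ (Finset.range T).filter (fun k => s k = u), g k j) j
            - x u j)^2
        ≤ (x u j - η * (∑ k ∈ (Finset.range T).filter (fun k => s k = u), g k j) - x u j)^2 := h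
      _ = η^2 * (∑ k ∈ (Finset.range T).filter (fun k => s k = u), g k j)^2 := by ring
  -- descent inequality
  have hdesc : ∀ u, u < T →
      2*η*(∑ j, (∑ k ∈ (Finset.range T).filter (fun k => s k = u), g k j) * (x u j - y j))
        ≤ (∑ j, (x u j - y j)^2) - (∑ j, (x (u+1) j - y j)^2)
          + η^2 * ((((Finset.range T).filter (fun k => s k = u)).card : ℝ)^2 * L^2) := by
    intro u hu
    have key : ∑ j, (x (u+1) j - y j)^2
        ≤ (∑ j, (x u j - y j)^2)
          - 2*η*(∑ j, (∑ k ∈ (Finset.range T).filter (fun k => s k = u), g k j) * (x u j - y j))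
          + η^2 * ∑ j, (∑ k ∈ (Finset.range T).filter (fun k => s k = u), g k j)^2 := by
      have expand : (∑ j, (x u j - y j)^2)
          - 2*η*(∑ j, (∑ k ∈ (Finset.range T).filter (fun k => s k = u), g k j) * (x u j - y j))
          + η^2 * ∑ j, (∑ k ∈ (Finset.range T).filter (fun k => s k = u), g k j)^2
          = ∑ j, ((x u j - y j)^2
              - 2*η*((∑ k ∈ (Finset.range T).filter (fun k => s k = u), g k j) * (x u j - y j))
              + η^2 * (∑ k ∈ (Finset.range T).filter (fun k => s k = u), g k j)^2) := by
        rw [Finset.sum_add_distrib, Finset.sum_sub_distrib, ← Finset.mul_sum, ← Finset.mul_sum]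
      rw [expand, hrec u hu]
      refine Finset.sum_le_sum fun j _ => ?_
      have h := clip_pt (x u j - η * ∑ k ∈ (Finset.range T).filter (fun k => s k = u), g k j)
        (y j) (hy j).1 (hy j).2
      calc (clip (fun j => x u j - η * ∑ k ∈ (Finset.range T).filter (fun k => s k = u), g k j) j
              - y j)^2
          ≤ (x u j - η * (∑ k ∈ (Finset.range T).filter (fun k => s k = u), g k j) - y j)^2 := h
        _ = (x u j - y j)^2
              - 2*η*((∑ k ∈ (Finset.range T).filter (fun k => s k = u), g k j) * (x u j - y j))
              + η^2 * (∑ k ∈ (Finset.range T).filter (fun k => s k = u), g k j)^2 := by ring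
    have h2 := hhN u hu
    nlinarith [sq_nonneg η]
  -- summed descent
  have hA : ∑ u ∈ Finset.range T,
        (∑ j, (∑ k ∈ (Finset.range T).filter (fun k => s k = u), g k j) * (x u j - y j))
      ≤ (n:ℝ)/(2*η) + η/2 * L^2 *
          ∑ u ∈ Finset.range T, (((Finset.range T).filter (fun k => s k = u)).card : ℝ)^2 := by
    have htel : ∑ u ∈ Finset.range T,
          ((∑ j, (x u j - y j)^2) - (∑ j, (x (u+1) j - y j)^2))
        = (∑ j, (x 0 j - y j)^2) - (∑ j, (x T j - y j)^2) :=
      Finset.sum_range_sub' (fun u => ∑ j, (x u j - y j)^2) T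
    have hR : ∑ j, (x 0 j - y j)^2 ≤ (n:ℝ) := by
      calc ∑ j, (x 0 j - y j)^2 ≤ ∑ _j : Fin n, (1:ℝ) := by
            refine Finset.sum_le_sum fun j _ => ?_
            have h1 := hx0 j; have h2 := hy j
            nlinarith [h1.1, h1.2, h2.1, h2.2]
        _ = (n:ℝ) := by simp
    have hRT : (0:ℝ) ≤ ∑ j, (x T j - y j)^2 := Finset.sum_nonneg fun j _ => sq_nonneg _
    have hsumd := Finset.sum_le_sum (fun u hu => hdesc u (Finset.mem_range.mp hu))
    rw [Finset.sum_add_distrib, htel, ← Finset.mul_sum, ← Finset.mul_sum] at hsumd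
    have hfact : η^2 * ∑ u ∈ Finset.range T,
        ((((Finset.range T).filter (fun k => s k = u)).card : ℝ)^2 * L^2)
        = η^2 * L^2 * ∑ u ∈ Finset.range T,
            (((Finset.range T).filter (fun k => s k = u)).card : ℝ)^2 := by
      rw [Finset.mul_sum, Finset.mul_sum]
      exact Finset.sum_congr rfl fun u _ => by ring
    rw [hfact] at hsumd
    have h2η : (0:ℝ) < 2*η := by linarith
    rw [← sub_nonneg]
    have expand : (n:ℝ)/(2*η) + η/2 * L^2 *
          (∑ u ∈ Finset.range T, (((Finset.range T).filter (fun k => s k = u)).card : ℝ)^2)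
        - ∑ u ∈ Finset.range T,
            (∑ j, (∑ k ∈ (Finset.range T).filter (fun k => s k = u), g k j) * (x u j - y j))
        = ((n:ℝ) + η^2 * L^2 *
            (∑ u ∈ Finset.range T, (((Finset.range T).filter (fun k => s k = u)).card : ℝ)^2)
          - 2*η*∑ u ∈ Finset.range T,
            (∑ j, (∑ k ∈ (Finset.range T).filter (fun k => s k = u), g k j) * (x u j - y j)))
          / (2*η) := by
      field_simp
    rw [expand]
    apply div_nonneg _ (le_of_lt h2η)
    linarith [hsumd, hR, hRT]
  -- cross term bound per k
  have hcross : ∀ k, k < T → ∑ j, g k j * (x k j - x (s k) j)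
      ≤ η * L^2 * ∑ v ∈ Finset.Ico k (s k),
          (((Finset.range T).filter (fun k' => s k' = v)).card : ℝ) := by
    intro k hk
    have hsk := hs k hk
    have htel2 : ∀ j, x k j - x (s k) j
        = ∑ v ∈ Finset.Ico k (s k), (x v j - x (v+1) j) :=
      fun j => (sum_Ico_tel (fun v => x v j) k (s k) hsk.1).symm
    have step1 : ∑ j, g k j * (x k j - x (s k) j)
        = ∑ v ∈ Finset.Ico k (s k), ∑ j, g k j * (x v j - x (v+1) j) := by
      rw [Finset.sum_congr rfl (fun j _ => by rw [htel2 j, Finset.mul_sum]), Finset.sum_comm]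
    rw [step1]
    have hbd : ∀ v ∈ Finset.Ico k (s k), ∑ j, g k j * (x v j - x (v+1) j)
        ≤ L * (η * ((((Finset.range T).filter (fun k' => s k' = v)).card : ℝ) * L)) := by
      intro v hv
      have hvT : v < T := by
        have := Finset.mem_Ico.mp hv
        omega
      have hcard : (0:ℝ) ≤ (((Finset.range T).filter (fun k' => s k' = v)).card : ℝ) :=
        Nat.cast_nonneg _
      refine inner_le_of_sq _ _ _ _ hL (by positivity) (hg k hk) ?_
      have heq : ∑ j, (x v j - x (v+1) j)^2 = ∑ j, (x (v+1) j - x v j)^2 :=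
        Finset.sum_congr rfl fun j _ => by ring
      rw [heq]
      calc ∑ j, (x (v+1) j - x v j)^2
          ≤ η^2 * ∑ j, (∑ k' ∈ (Finset.range T).filter (fun k' => s k' = v), g k' j)^2 :=
            hstepN v hvT
        _ ≤ η^2 * ((((Finset.range T).filter (fun k' => s k' = v)).card : ℝ)^2 * L^2) :=
            mul_le_mul_of_nonneg_left (hhN v hvT) (sq_nonneg η)
        _ = (η * ((((Finset.range T).filter (fun k' => s k' = v)).card : ℝ) * L))^2 := by ring
    calc ∑ v ∈ Finset.Ico k (s k), ∑ j, g k j * (x v j - x (v+1) j)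
        ≤ ∑ v ∈ Finset.Ico k (s k),
            L * (η * ((((Finset.range T).filter (fun k' => s k' = v)).card : ℝ) * L)) :=
          Finset.sum_le_sum hbd
      _ = η * L^2 * ∑ v ∈ Finset.Ico k (s k),
            (((Finset.range T).filter (fun k' => s k' = v)).card : ℝ) := by
          rw [Finset.mul_sum]
          exact Finset.sum_congr rfl fun v _ => by ring
  -- decomposition by fibers
  have hmaps : ∀ k ∈ Finset.range T, s k ∈ Finset.range T := fun k hk =>
    Finset.mem_range.mpr (hs k (Finset.mem_range.mp hk)).2
  have hdecomp : ∑ t ∈ Finset.range T, ∑ j, g t j * (x t j - y j)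
      = ∑ u ∈ Finset.range T, ∑ k ∈ (Finset.range T).filter (fun k => s k = u),
          ∑ j, g k j * (x k j - y j) :=
    (Finset.sum_fiberwise_of_maps_to hmaps _).symm
  have hper : ∀ u ∈ Finset.range T,
      ∑ k ∈ (Finset.range T).filter (fun k => s k = u), ∑ j, g k j * (x k j - y j)
        ≤ (∑ j, (∑ k ∈ (Finset.range T).filter (fun k => s k = u), g k j) * (x u j - y j))
          + ∑ k ∈ (Finset.range T).filter (fun k => s k = u),
              η * L^2 * ∑ v ∈ Finset.Ico k (s k),
                (((Finset.range T).filter (fun k' => s k' = v)).card : ℝ) := by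
    intro u _
    have hsplit : ∀ k ∈ (Finset.range T).filter (fun k => s k = u),
        ∑ j, g k j * (x k j - y j)
          = ∑ j, g k j * (x u j - y j) + ∑ j, g k j * (x k j - x u j) := by
      intro k _
      rw [← Finset.sum_add_distrib]
      exact Finset.sum_congr rfl fun j _ => by ring
    rw [Finset.sum_congr rfl hsplit, Finset.sum_add_distrib]
    refine add_le_add (le_of_eq ?_) (Finset.sum_le_sum ?_)
    · rw [Finset.sum_comm]
      exact Finset.sum_congr rfl fun j _ => (Finset.sum_mul _ _ _).symm
    · intro k hk
      have hku : s k = u := (Finset.mem_filter.mp hk).2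
      have hkT : k < T := Finset.mem_range.mp (Finset.mem_filter.mp hk).1
      calc ∑ j, g k j * (x k j - x u j)
          = ∑ j, g k j * (x k j - x (s k) j) := by rw [hku]
        _ ≤ η * L^2 * ∑ v ∈ Finset.Ico k (s k),
              (((Finset.range T).filter (fun k' => s k' = v)).card : ℝ) := hcross k hkT
  have hcrossT : ∑ u ∈ Finset.range T, ∑ k ∈ (Finset.range T).filter (fun k => s k = u),
        η * L^2 * ∑ v ∈ Finset.Ico k (s k),
          (((Finset.range T).filter (fun k' => s k' = v)).card : ℝ)
      = η * L^2 * ∑ k ∈ Finset.range T, ∑ v ∈ Finset.Ico k (s k),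
          (((Finset.range T).filter (fun k' => s k' = v)).card : ℝ) := by
    rw [Finset.sum_fiberwise_of_maps_to hmaps
      (fun k => η * L^2 * ∑ v ∈ Finset.Ico k (s k),
        (((Finset.range T).filter (fun k' => s k' = v)).card : ℝ)), Finset.mul_sum]
  calc ∑ t ∈ Finset.range T, ∑ j, g t j * (x t j - y j)
      = ∑ u ∈ Finset.range T, ∑ k ∈ (Finset.range T).filter (fun k => s k = u),
          ∑ j, g k j * (x k j - y j) := hdecomp
    _ ≤ ∑ u ∈ Finset.range T,
          ((∑ j, (∑ k ∈ (Finset.range T).filter (fun k => s k = u), g k j) * (x u j - y j))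
          + ∑ k ∈ (Finset.range T).filter (fun k => s k = u),
              η * L^2 * ∑ v ∈ Finset.Ico k (s k),
                (((Finset.range T).filter (fun k' => s k' = v)).card : ℝ)) :=
        Finset.sum_le_sum hper
    _ = (∑ u ∈ Finset.range T,
          (∑ j, (∑ k ∈ (Finset.range T).filter (fun k => s k = u), g k j) * (x u j - y j)))
        + ∑ u ∈ Finset.range T, ∑ k ∈ (Finset.range T).filter (fun k => s k = u),
            η * L^2 * ∑ v ∈ Finset.Ico k (s k),
              (((Finset.range T).filter (fun k' => s k' = v)).card : ℝ) :=
        Finset.sum_add_distrib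
    _ ≤ ((n:ℝ)/(2*η) + η/2 * L^2 *
          ∑ u ∈ Finset.range T, (((Finset.range T).filter (fun k => s k = u)).card : ℝ)^2)
        + η * L^2 * ∑ k ∈ Finset.range T, ∑ v ∈ Finset.Ico k (s k),
            (((Finset.range T).filter (fun k' => s k' = v)).card : ℝ) := by
        rw [hcrossT]
        exact add_le_add_left hA _
    _ = (n : ℝ) / (2*η) + η * L^2 *
        ((∑ t ∈ Finset.range T, (((Finset.range T).filter (fun k => s k = t)).card : ℝ)^2) / 2
         + ∑ k ∈ Finset.range T, ∑ v ∈ Finset.Ico k (s k),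
             (((Finset.range T).filter (fun k' => s k' = v)).card : ℝ)) := by ring

lemma card_filter_as_sum (T : ℕ) (s : ℕ → ℕ) (v : ℕ) :
    ((Finset.range T).filter (fun k' => s k' = v)).card
      = ∑ j ∈ Finset.range T, if s j = v then 1 else 0 :=
  Finset.card_filter _ _

lemma comb_bound (T : ℕ) (s : ℕ → ℕ) (hs : ∀ k, k < T → k ≤ s k ∧ s k < T) :
    2 * (∑ k ∈ Finset.range T, ∑ v ∈ Finset.Ico k (s k),
          ((Finset.range T).filter (fun k' => s k' = v)).card)
      + ∑ t ∈ Finset.range T, ((Finset.range T).filter (fun k' => s k' = t)).card ^ 2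
    ≤ 2 * ∑ k ∈ Finset.range T, (s k + 1 - k) := by
  -- C as a double sum of indicators
  have hC : (∑ k ∈ Finset.range T, ∑ v ∈ Finset.Ico k (s k),
        ((Finset.range T).filter (fun k' => s k' = v)).card)
      = ∑ k ∈ Finset.range T, ∑ j ∈ Finset.range T,
          (if k ≤ s j ∧ s j < s k then 1 else 0) := by
    refine Finset.sum_congr rfl fun k _ => ?_
    rw [Finset.sum_congr rfl (fun v _ => card_filter_as_sum T s v), Finset.sum_comm]
    refine Finset.sum_congr rfl fun j _ => ?_
    rw [Finset.sum_ite_eq (Finset.Ico k (s k)) (s j) (fun _ => 1)]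
    simp [Finset.mem_Ico]
  have hC' : (∑ k ∈ Finset.range T, ∑ j ∈ Finset.range T,
        (if k ≤ s j ∧ s j < s k then 1 else 0))
      = ∑ k ∈ Finset.range T, ∑ j ∈ Finset.range T,
          (if j ≤ s k ∧ s k < s j then 1 else 0) :=
    Finset.sum_comm
  -- Δ as a double sum of indicators
  have hΔ : (∑ t ∈ Finset.range T, ((Finset.range T).filter (fun k' => s k' = t)).card ^ 2)
      = ∑ k ∈ Finset.range T, ∑ j ∈ Finset.range T, (if s j = s k then 1 else 0) := by
    have h1 : ∀ t ∈ Finset.range T,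
        ((Finset.range T).filter (fun k' => s k' = t)).card ^ 2
        = ∑ k ∈ Finset.range T,
            (if s k = t then ((Finset.range T).filter (fun k' => s k' = t)).card else 0) := by
      intro t _
      rw [pow_two, card_filter_as_sum T s t, Finset.sum_mul]
      refine Finset.sum_congr rfl fun k _ => ?_
      rw [ite_mul, one_mul, zero_mul]
    rw [Finset.sum_congr rfl h1, Finset.sum_comm]
    refine Finset.sum_congr rfl fun k hk => ?_
    have hkT : s k ∈ Finset.range T := Finset.mem_range.mpr (hs k (Finset.mem_range.mp hk)).2
    rw [Finset.sum_ite_eq (Finset.range T) (s k)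
      (fun t => ((Finset.range T).filter (fun k' => s k' = t)).card), if_pos hkT,
      card_filter_as_sum T s (s k)]
  -- pointwise bound
  have hpt : ∀ k ∈ Finset.range T, ∀ j ∈ Finset.range T,
      ((if k ≤ s j ∧ s j < s k then 1 else 0) + (if j ≤ s k ∧ s k < s j then 1 else 0)
        + (if s j = s k then 1 else 0) : ℕ)
      ≤ (if j < k ∧ k ≤ s j then 1 else 0) + (if k < j ∧ j ≤ s k then 1 else 0)
        + (if j = k then 1 else 0) := by
    intro k hk j hj
    have h1 := hs k (Finset.mem_range.mp hk)
    have h2 := hs j (Finset.mem_range.mp hj)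
    split_ifs <;> omega
  -- evaluate the right-hand side
  have hT1 : ∑ k ∈ Finset.range T, ∑ j ∈ Finset.range T,
      ((if j < k ∧ k ≤ s j then 1 else 0) : ℕ) = ∑ j ∈ Finset.range T, (s j - j) := by
    rw [Finset.sum_comm]
    refine Finset.sum_congr rfl fun j hj => ?_
    have hjT := hs j (Finset.mem_range.mp hj)
    rw [← Finset.card_filter]
    have heq2 : (Finset.range T).filter (fun k => j < k ∧ k ≤ s j) = Finset.Ioc j (s j) := by
      ext a
      simp only [Finset.mem_filter, Finset.mem_range, Finset.mem_Ioc]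
      omega
    rw [heq2, Nat.card_Ioc]
  have hT2 : ∑ k ∈ Finset.range T, ∑ j ∈ Finset.range T,
      ((if k < j ∧ j ≤ s k then 1 else 0) : ℕ) = ∑ k ∈ Finset.range T, (s k - k) := by
    refine Finset.sum_congr rfl fun k hk => ?_
    have hkT := hs k (Finset.mem_range.mp hk)
    rw [← Finset.card_filter]
    have heq2 : (Finset.range T).filter (fun j => k < j ∧ j ≤ s k) = Finset.Ioc k (s k) := by
      ext a
      simp only [Finset.mem_filter, Finset.mem_range, Finset.mem_Ioc]
      omega
    rw [heq2, Nat.card_Ioc]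
  have hT3 : ∑ k ∈ Finset.range T, ∑ j ∈ Finset.range T,
      ((if j = k then 1 else 0) : ℕ) = T := by
    have : ∀ k ∈ Finset.range T, ∑ j ∈ Finset.range T, ((if j = k then 1 else 0) : ℕ) = 1 := by
      intro k hk
      rw [Finset.sum_ite_eq' (Finset.range T) k (fun _ => 1), if_pos hk]
    rw [Finset.sum_congr rfl this, Finset.sum_const, smul_eq_mul, mul_one, Finset.card_range]
  -- put it together
  have hmain : 2 * (∑ k ∈ Finset.range T, ∑ v ∈ Finset.Ico k (s k),
        ((Finset.range T).filter (fun k' => s k' = v)).card)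
      + ∑ t ∈ Finset.range T, ((Finset.range T).filter (fun k' => s k' = t)).card ^ 2
      ≤ 2 * (∑ k ∈ Finset.range T, (s k - k)) + T := by
    have hsum : 2 * (∑ k ∈ Finset.range T, ∑ v ∈ Finset.Ico k (s k),
          ((Finset.range T).filter (fun k' => s k' = v)).card)
        + ∑ t ∈ Finset.range T, ((Finset.range T).filter (fun k' => s k' = t)).card ^ 2
        = ∑ k ∈ Finset.range T, ∑ j ∈ Finset.range T,
            ((if k ≤ s j ∧ s j < s k then 1 else 0) + (if j ≤ s k ∧ s k < s j then 1 else 0)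
              + (if s j = s k then 1 else 0) : ℕ) := by
      simp only [Finset.sum_add_distrib]
      rw [two_mul, hΔ, ← hC', hC]
    rw [hsum]
    calc ∑ k ∈ Finset.range T, ∑ j ∈ Finset.range T,
          ((if k ≤ s j ∧ s j < s k then 1 else 0) + (if j ≤ s k ∧ s k < s j then 1 else 0)
            + (if s j = s k then 1 else 0) : ℕ)
        ≤ ∑ k ∈ Finset.range T, ∑ j ∈ Finset.range T,
            ((if j < k ∧ k ≤ s j then 1 else 0) + (if k < j ∧ j ≤ s k then 1 else 0)
              + (if j = k then 1 else 0) : ℕ) :=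
          Finset.sum_le_sum fun k hk => Finset.sum_le_sum fun j hj => hpt k hk j hj
      _ = 2 * (∑ k ∈ Finset.range T, (s k - k)) + T := by
          simp only [Finset.sum_add_distrib]
          rw [hT1, hT2, hT3, two_mul]
  refine le_trans hmain ?_
  have heq : ∑ k ∈ Finset.range T, (s k + 1 - k)
      = (∑ k ∈ Finset.range T, (s k - k)) + T := by
    have h1 : ∀ k ∈ Finset.range T, s k + 1 - k = (s k - k) + 1 := by
      intro k hk
      have := hs k (Finset.mem_range.mp hk)
      omega
    rw [Finset.sum_congr rfl h1, Finset.sum_add_distrib, Finset.sum_const, smul_eq_mul,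
      mul_one, Finset.card_range]
  rw [heq]
  omega

lemma eta_bound (nr Dr L : ℝ) (hn : 0 < nr) (hD : 0 < Dr) (hL : 0 < L) (η : ℝ)
    (hη : η = Real.sqrt nr / (L * Real.sqrt Dr)) :
    nr/(2*η) + η * L^2 * Dr ≤ 2 * L * Real.sqrt (nr * Dr) := by
  have hc2 : Real.sqrt nr * Real.sqrt nr = nr := Real.mul_self_sqrt hn.le
  have hr2 : Real.sqrt Dr * Real.sqrt Dr = Dr := Real.mul_self_sqrt hD.le
  have hmul : Real.sqrt (nr * Dr) = Real.sqrt nr * Real.sqrt Dr := Real.sqrt_mul hn.le _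
  have hcpos : 0 < Real.sqrt nr := Real.sqrt_pos.mpr hn
  have hrpos : 0 < Real.sqrt Dr := Real.sqrt_pos.mpr hD
  have e1 : nr/(2*η) = Real.sqrt nr * L * Real.sqrt Dr / 2 := by
    rw [hη]
    have hcalc : 2 * (Real.sqrt nr/(L*Real.sqrt Dr)) = (2*Real.sqrt nr)/(L*Real.sqrt Dr) := by
      ring
    rw [hcalc, div_div_eq_mul_div, div_eq_div_iff (by positivity) (by norm_num)]
    linear_combination (-(2*L*Real.sqrt Dr)) * hc2
  have e2 : η * L^2 * Dr = Real.sqrt nr * L * Real.sqrt Dr := by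
    rw [hη, div_mul_eq_mul_div, div_mul_eq_mul_div, div_eq_iff (by positivity)]
    linear_combination (-(Real.sqrt nr * L^2)) * hr2
  rw [hmul, e1, e2]
  nlinarith [mul_pos (mul_pos hcpos hL) hrpos]


/-- Theorem 2, DOGD-NF: delayed online gradient descent with chain
gradients of the Lovász extension attains
`∑_t f_{t,L}(x_t) - ((1/α) ∑_t f̄_t(S) - β ∑_t f̲_t(S)) ≤ 2 L √(n D)`, where
`D = ∑_t d_t = d̄ T`. Rounds are indexed `t = 0, …, T-1` (0-indexed version of
`t = 1, …, T`). -/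
theorem dogd_nf_regret (n T : ℕ) (hn : 1 ≤ n) (hT : 1 ≤ T) (α β L : ℝ)
    (hα : 0 < α ∧ α ≤ 1) (hβ : 0 < β ∧ β ≤ 1) (hL : 0 < L)
    (fbar funder : ℕ → Finset (Fin n) → ℝ)
    (hbar : ∀ t < T, normalizedF (fbar t) ∧ nondecreasingF (fbar t) ∧
      weaklyDRSub α (fbar t))
    (hunder : ∀ t < T, normalizedF (funder t) ∧ nondecreasingF (funder t) ∧
      weaklyDRSuper β (funder t))
    (hsum : ∀ t < T, ∀ S : Finset (Fin n), fbar t S + funder t S ≤ L)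
    (d : ℕ → ℕ) (hd : ∀ t < T, 1 ≤ d t ∧ t + d t ≤ T)
    (D : ℕ) (hD : D = ∑ t ∈ Finset.range T, d t)
    (η : ℝ) (hη : η = Real.sqrt n / (L * Real.sqrt D))
    (x : ℕ → Fin n → ℝ) (π : ℕ → Equiv.Perm (Fin n))
    (hx0 : inCube (x 0)) (hπ : ∀ t < T, isSorting (x t) (π t))
    (hrec : ∀ t < T, x (t + 1) =
      clip (fun j => x t j -
        η * ∑ k ∈ (Finset.range T).filter (fun k => k + d k - 1 = t),
          chainGrad (fun S => fbar k S - funder k S) (π k) j))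
    (S : Finset (Fin n)) :
    ∑ t ∈ Finset.range T, lovasz (fun S' => fbar t S' - funder t S') (x t) (π t)
        - ((1 / α) * ∑ t ∈ Finset.range T, fbar t S
            - β * ∑ t ∈ Finset.range T, funder t S)
      ≤ 2 * L * Real.sqrt ((n : ℝ) * D) := by

  obtain ⟨hα0, hα1⟩ := hα
  obtain ⟨hβ0, hβ1⟩ := hβ
  have hD1 : 1 ≤ D := by
    have h1 : T = ∑ _t ∈ Finset.range T, 1 := by
      rw [Finset.sum_const, smul_eq_mul, mul_one, Finset.card_range]
    have h2 : ∑ _t ∈ Finset.range T, 1 ≤ ∑ t ∈ Finset.range T, d t :=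
      Finset.sum_le_sum fun t ht => (hd t (Finset.mem_range.mp ht)).1
    omega
  have hnR : (0:ℝ) < n := by exact_mod_cast hn
  have hDR : (0:ℝ) < D := by exact_mod_cast hD1
  have hcpos : 0 < Real.sqrt n := Real.sqrt_pos.mpr hnR
  have hrpos : 0 < Real.sqrt D := Real.sqrt_pos.mpr hDR
  have hηpos : 0 < η := by
    rw [hη]; exact div_pos hcpos (mul_pos hL hrpos)
  set y : Fin n → ℝ := fun j => if j ∈ S then 1 else 0 with hy_def
  have hy : inCube y := by
    intro j
    by_cases h : j ∈ S <;> simp [hy_def, h]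
  -- per-round linearization
  have hround : ∀ t ∈ Finset.range T,
      lovasz (fun S' => fbar t S' - funder t S') (x t) (π t)
          - ((1/α) * fbar t S - β * funder t S)
        ≤ ∑ j, chainGrad (fun S' => fbar t S' - funder t S') (π t) j * (x t j - y j) := by
    intro t htm
    have ht := Finset.mem_range.mp htm
    obtain ⟨hb0x, hbm, hbs⟩ := hbar t ht
    obtain ⟨hu0x, hum, hus⟩ := hunder t ht
    have hb0 : fbar t ∅ = 0 := hb0x
    have hu0 : funder t ∅ = 0 := hu0x
    have hlov : lovasz (fun S' => fbar t S' - funder t S') (x t) (π t)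
        = ∑ j, x t j * chainGrad (fun S' => fbar t S' - funder t S') (π t) j := by
      rw [lovasz_eq_inner]
      simp only [hb0, hu0, sub_zero, add_zero]
    have h1 : α * ∑ j ∈ S, chainGrad (fbar t) (π t) j ≤ fbar t S :=
      sum_chainGrad_le_sub (fbar t) hbs hb0 (π t) S
    have h2 : β * funder t S ≤ ∑ j ∈ S, chainGrad (funder t) (π t) j :=
      sub_le_sum_chainGrad (funder t) hus hu0 (π t) S
    have h1' : ∑ j ∈ S, chainGrad (fbar t) (π t) j ≤ (1/α) * fbar t S := by
      rw [div_mul_eq_mul_div, one_mul, le_div_iff₀ hα0, mul_comm]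
      exact h1
    have hS : ∑ j ∈ S, chainGrad (fun S' => fbar t S' - funder t S') (π t) j
        ≤ (1/α) * fbar t S - β * funder t S := by
      have hsplit : ∑ j ∈ S, chainGrad (fun S' => fbar t S' - funder t S') (π t) j
          = (∑ j ∈ S, chainGrad (fbar t) (π t) j)
            - ∑ j ∈ S, chainGrad (funder t) (π t) j := by
        rw [← Finset.sum_sub_distrib]
        refine Finset.sum_congr rfl fun j _ => ?_
        simp only [chainGrad]
        ring
      rw [hsplit]
      linarith
    have hinner : ∑ j, chainGrad (fun S' => fbar t S' - funder t S') (π t) j * y j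
        = ∑ j ∈ S, chainGrad (fun S' => fbar t S' - funder t S') (π t) j := by
      rw [hy_def]
      simp only [mul_ite, mul_one, mul_zero]
      rw [Finset.sum_ite_mem, Finset.univ_inter]
    have hexp : ∑ j, chainGrad (fun S' => fbar t S' - funder t S') (π t) j * (x t j - y j)
        = (∑ j, x t j * chainGrad (fun S' => fbar t S' - funder t S') (π t) j)
          - ∑ j, chainGrad (fun S' => fbar t S' - funder t S') (π t) j * y j := by
      rw [← Finset.sum_sub_distrib]
      exact Finset.sum_congr rfl fun j _ => by ring
    rw [hlov, hexp, hinner]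
    linarith
  -- gradient norm bounds
  have hgB : ∀ t, t < T →
      ∑ j, (chainGrad (fun S' => fbar t S' - funder t S') (π t) j)^2 ≤ L^2 := by
    intro t ht
    obtain ⟨hb0x, hbm, _⟩ := hbar t ht
    obtain ⟨hu0x, hum, _⟩ := hunder t ht
    have hb0 : fbar t ∅ = 0 := hb0x
    have hu0 : funder t ∅ = 0 := hu0x
    exact normSq_chainGrad_le (fbar t) (funder t) L hb0 hu0 hbm hum (hsum t ht) (π t)
  -- deadline facts
  have hsB : ∀ t, t < T → t ≤ (fun k => k + d k - 1) t ∧ (fun k => k + d k - 1) t < T := by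
    intro t ht
    have := hd t ht
    simp only
    omega
  -- core OGD bound
  have hcore := dogd_core (n := n) (T := T) η L hηpos (le_of_lt hL)
    (fun t => chainGrad (fun S' => fbar t S' - funder t S') (π t))
    (fun k => k + d k - 1) hgB hsB x hx0 (fun t ht => hrec t ht) y hy
  -- combinatorial bound
  have hcomb : ((∑ t ∈ Finset.range T,
        (((Finset.range T).filter (fun k => (fun k => k + d k - 1) k = t)).card : ℝ)^2) / 2
      + ∑ k ∈ Finset.range T, ∑ v ∈ Finset.Ico k ((fun k => k + d k - 1) k),
          (((Finset.range T).filter (fun k' => (fun k => k + d k - 1) k' = v)).card : ℝ))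
      ≤ (D:ℝ) := by
    have hN := comb_bound T (fun k => k + d k - 1) (fun k hk => hsB k hk)
    have hDs : ∑ k ∈ Finset.range T, ((fun k => k + d k - 1) k + 1 - k) = D := by
      rw [hD]
      refine Finset.sum_congr rfl fun k hk => ?_
      have := hd k (Finset.mem_range.mp hk)
      simp only
      omega
    rw [hDs] at hN
    have hcast : ((2 * (∑ k ∈ Finset.range T, ∑ v ∈ Finset.Ico k ((fun k => k + d k - 1) k),
          ((Finset.range T).filter (fun k' => (fun k => k + d k - 1) k' = v)).card)
        + ∑ t ∈ Finset.range T,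
            ((Finset.range T).filter (fun k' => (fun k => k + d k - 1) k' = t)).card ^ 2 : ℕ) : ℝ)
        ≤ ((2 * D : ℕ) : ℝ) := by exact_mod_cast hN
    push_cast at hcast
    linarith
  -- assemble
  have hLHS : ∑ t ∈ Finset.range T, lovasz (fun S' => fbar t S' - funder t S') (x t) (π t)
        - ((1 / α) * ∑ t ∈ Finset.range T, fbar t S
            - β * ∑ t ∈ Finset.range T, funder t S)
      = ∑ t ∈ Finset.range T,
          (lovasz (fun S' => fbar t S' - funder t S') (x t) (π t)
            - ((1/α) * fbar t S - β * funder t S)) := by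
    rw [Finset.sum_sub_distrib, Finset.mul_sum, Finset.mul_sum, Finset.sum_sub_distrib]
  have hηL2 : 0 ≤ η * L^2 := by positivity
  have hfinal : (n:ℝ)/(2*η) + η * L^2 * (D:ℝ) ≤ 2 * L * Real.sqrt ((n : ℝ) * D) :=
    eta_bound (n:ℝ) (D:ℝ) L hnR hDR hL η hη
  calc ∑ t ∈ Finset.range T, lovasz (fun S' => fbar t S' - funder t S') (x t) (π t)
        - ((1 / α) * ∑ t ∈ Finset.range T, fbar t S
            - β * ∑ t ∈ Finset.range T, funder t S)
      = ∑ t ∈ Finset.range T,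
          (lovasz (fun S' => fbar t S' - funder t S') (x t) (π t)
            - ((1/α) * fbar t S - β * funder t S)) := hLHS
    _ ≤ ∑ t ∈ Finset.range T,
          ∑ j, chainGrad (fun S' => fbar t S' - funder t S') (π t) j * (x t j - y j) :=
        Finset.sum_le_sum hround
    _ ≤ (n : ℝ) / (2*η) + η * L^2 *
        ((∑ t ∈ Finset.range T,
            (((Finset.range T).filter (fun k => (fun k => k + d k - 1) k = t)).card : ℝ)^2) / 2
         + ∑ k ∈ Finset.range T, ∑ v ∈ Finset.Ico k ((fun k => k + d k - 1) k),
             (((Finset.range T).filter (fun k' => (fun k => k + d k - 1) k' = v)).card : ℝ)) :=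
        hcore
    _ ≤ (n : ℝ) / (2*η) + η * L^2 * (D:ℝ) := by
        have := mul_le_mul_of_nonneg_left hcomb hηL2
        linarith
    _ ≤ 2 * L * Real.sqrt ((n : ℝ) * D) := hfinal
end
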